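/- For any d-dimensional Fano simplex Δ of Gorenstein index g, the product g^{d−1}·λ(Δ*) is an integer, where λ(Δ*) is the factor of the weight system of the dual simplex Δ*. -/

import Mathlib

open Finset Pointwise

/-- Cast an integer vector to a rational vector. -/
def toQ {d : ℕ} (v : Fin d → ℤ) : Fin d → ℚ := fun j => (v j : ℚ)

/-- An integer vector is primitive if the gcd of its entries is 1. -/
def IsPrimitive {d : ℕ} (v : Fin d → ℤ) : Prop := Finset.univ.gcd v = 1

/-- The origin lies in the interior of the simplex with the given vertices,
i.e. the origin is a convex combination of the vertices with positive coefficients. -/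
def OriginInInterior {d : ℕ} (v : Fin (d + 1) → Fin d → ℚ) : Prop :=
  ∃ w : Fin (d + 1) → ℚ, (∀ i, 0 < w i) ∧ ∑ i, w i = 1 ∧ ∀ j, ∑ i, w i * v i j = 0

/-- A Fano simplex, given by its tuple of vertices: the vertices are primitive integer
vectors, affinely independent, and the origin lies in the interior. -/
def IsFanoSimplex {d : ℕ} (v : Fin (d + 1) → Fin d → ℤ) : Prop :=
  AffineIndependent ℚ (fun i => toQ (v i)) ∧ (∀ i, IsPrimitive (v i)) ∧
    OriginInInterior fun i => toQ (v i)

/-- The simplex spanned by the given vertices. -/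
def simplexHull {d : ℕ} (v : Fin (d + 1) → Fin d → ℚ) : Set (Fin d → ℚ) :=
  convexHull ℚ (Set.range v)

/-- The dual body `Δ* = {u : ⟨u,v⟩ ≥ -1 for all v ∈ Δ}`. -/
def dualBody {d : ℕ} (S : Set (Fin d → ℚ)) : Set (Fin d → ℚ) :=
  {u | ∀ x ∈ S, -1 ≤ ∑ j, u j * x j}

/-- A set is a lattice polytope iff it is the convex hull of its integral points
(equivalently, all its vertices are lattice points). -/
def IsLatticeSet {d : ℕ} (S : Set (Fin d → ℚ)) : Prop :=
  S = convexHull ℚ {x ∈ S | ∀ j, ∃ z : ℤ, x j = (z : ℚ)}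

/-- The Gorenstein index: the least positive integer `g` such that `g • Δ*` is a
lattice polytope. -/
noncomputable def gorensteinIndex {d : ℕ} (v : Fin (d + 1) → Fin d → ℚ) : ℕ :=
  sInf {g : ℕ | 0 < g ∧ IsLatticeSet ((g : ℚ) • dualBody (simplexHull v))}

/-- The normalized volume `d! · vol(Δ)` of the simplex with the given vertices. -/
def normVol {d : ℕ} (v : Fin (d + 1) → Fin d → ℚ) : ℚ :=
  |(Matrix.of fun i j : Fin d => v i.succ j - v 0 j).det|

/-- Two (Fano) simplices, given by their vertex tuples, are isomorphic iff some
unimodular integer matrix maps the vertex set of one onto the vertex set of the other. -/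
def IsIsomorphicTo {d : ℕ} (v w : Fin (d + 1) → Fin d → ℤ) : Prop :=
  ∃ (U : Matrix (Fin d) (Fin d) ℤ) (σ : Equiv.Perm (Fin (d + 1))),
    IsUnit U.det ∧ ∀ i, U.mulVec (v i) = w (σ i)


/-- The weight system of a simplex: `q_i = |det(u_j : j ≠ i)|`. -/
def weight {d : ℕ} (u : Fin (d + 1) → Fin d → ℚ) (i : Fin (d + 1)) : ℚ :=
  |(Matrix.of fun r c : Fin d => u (i.succAbove r) c).det|

/-- `lam` is the factor of the weight system of `u`: the weight system equals
`lam` times a reduced (integral, gcd 1, positive) weight system. -/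
def IsFactor {d : ℕ} (u : Fin (d + 1) → Fin d → ℚ) (lam : ℚ) : Prop :=
  ∃ N : Fin (d + 1) → ℕ, (∀ i, 0 < N i) ∧ Finset.univ.gcd N = 1 ∧
    ∀ i, weight u i = lam * (N i : ℚ)

open Matrix


lemma den_dvd_of_mul_int (q : ℚ) (n z : ℤ) (h : q * (n : ℚ) = (z : ℚ)) :
    (q.den : ℤ) ∣ n := by
  have hq : (q.num : ℚ) = q * (q.den : ℚ) := by
    have hd : ((q.den : ℚ)) ≠ 0 := by exact_mod_cast q.den_nz
    exact (Rat.mul_den_eq_num q).symm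
  have hnum : (q.num : ℚ) * (n : ℚ) = (z : ℚ) * (q.den : ℚ) := by
    rw [hq]; rw [mul_comm q (q.den : ℚ), mul_assoc, h]; ring
  have hz : q.num * n = z * (q.den : ℤ) := by exact_mod_cast hnum
  have hdvd : (q.den : ℤ) ∣ q.num * n := ⟨z, by rw [hz]; ring⟩
  have hcop : IsCoprime (q.den : ℤ) q.num := by
    rw [Int.isCoprime_iff_gcd_eq_one]
    simpa [Int.gcd, Nat.gcd_comm] using q.reduced.symm
  exact hcop.dvd_of_dvd_mul_left hdvd

lemma rat_eq_int_of_forall_mul_int {ι : Type*} [Fintype ι] (q : ℚ) (Nv : ι → ℤ)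
    (hg : ∀ k : ℤ, 0 ≤ k → (∀ c, k ∣ Nv c) → k ∣ 1)
    (h : ∀ c, ∃ z : ℤ, q * (Nv c : ℚ) = (z : ℚ)) : ∃ z : ℤ, q = (z : ℚ) := by
  have hden : ∀ c, (q.den : ℤ) ∣ Nv c := by
    intro c; obtain ⟨z, hz⟩ := h c; exact den_dvd_of_mul_int q _ z hz
  have h1 : (q.den : ℤ) ∣ 1 := hg _ (by positivity) hden
  have h2 : q.den = 1 := by
    have := Int.eq_one_of_dvd_one (by positivity) h1
    exact_mod_cast this
  exact ⟨q.num, ((Rat.den_eq_one_iff q).mp h2).symm⟩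

lemma key_det {m : ℕ} (g : ℚ) (vi : Fin (m + 1) → ℤ)
    (hprim : Finset.univ.gcd vi = 1)
    (R : Fin (m + 1) → Fin (m + 1) → ℚ)
    (hR : ∀ r, ∑ c, R r c * (vi c : ℚ) = -1)
    (hInt : ∀ r c, ∃ z : ℤ, g * R r c = (z : ℚ)) :
    ∃ z : ℤ, g ^ m * (Matrix.of R).det = (z : ℚ) := by
  classical
  choose W hW using hInt
  set vq : Fin (m + 1) → ℚ := fun c => (vi c : ℚ) with hvq
  set B : Matrix (Fin (m + 1)) (Fin (m + 1)) ℚ :=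
    Matrix.of (fun r c => if r = 0 then R 0 c else R r c - R 0 c) with hB
  have hBrow0 : ∀ c, B 0 c = R 0 c := by intro c; simp [hB]
  have hBrow : ∀ r, r ≠ 0 → ∀ c, B r c = R r c - R 0 c := by
    intro r hr c; simp [hB, hr]
  have hdetB : B.det = (Matrix.of R).det := by
    apply Matrix.det_eq_of_forall_row_eq_smul_add_const
      (fun r => if r = 0 then 0 else (-1 : ℚ)) 0 (by simp)
    intro r c
    by_cases hr : r = 0 <;> simp [hB, hr] <;> ring
  set sing : Fin (m + 1) → Fin (m + 1) → ℚ := fun c j => if c = j then 1 else 0 with hsing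
  set cvec : Fin (m + 1) → ℚ := fun c => (B.updateRow 0 (sing c)).det with hcvec
  have hcr : ∀ b : Fin (m + 1) → ℚ,
      (B.updateRow 0 b).det = Matrix.cramer (Bᵀ) b 0 := by
    intro b
    rw [Matrix.cramer_apply, Matrix.updateCol_transpose, Matrix.det_transpose]
  have h_expand : ∀ b : Fin (m + 1) → ℚ,
      (B.updateRow 0 b).det = ∑ c, b c * cvec c := by
    intro b
    rw [hcr]
    conv_lhs => rw [pi_eq_sum_univ b, map_sum]
    rw [Finset.sum_apply]
    refine Finset.sum_congr rfl fun c _ => ?_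
    rw [LinearMap.map_smul, Pi.smul_apply, smul_eq_mul, ← hcr]
  have h_orth : ∀ r, r ≠ 0 → ∑ c, B r c * cvec c = 0 := by
    intro r hr
    rw [← h_expand (B r)]
    exact Matrix.det_zero_of_row_eq (Ne.symm hr)
      (by rw [Matrix.updateRow_self, Matrix.updateRow_ne hr])
  have h_vorth : ∀ r, r ≠ 0 → ∑ c, B r c * vq c = 0 := by
    intro r hr
    have : ∑ c, B r c * vq c = (∑ c, R r c * vq c) - ∑ c, R 0 c * vq c := by
      rw [← Finset.sum_sub_distrib]
      exact Finset.sum_congr rfl fun c _ => by rw [hBrow r hr c]; ring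
    rw [this]
    have h1 : ∑ c, R r c * vq c = -1 := hR r
    have h2 : ∑ c, R 0 c * vq c = -1 := hR 0
    rw [h1, h2]; ring
  have scale : ∀ (b : Fin (m + 1) → ℚ) (bz : Fin (m + 1) → ℤ), (∀ c, b c = (bz c : ℚ)) →
      ∃ z : ℤ, g ^ m * (B.updateRow 0 b).det = (z : ℚ) := by
    intro b bz hbz
    set M := B.updateRow 0 b with hM
    set D : Matrix (Fin (m + 1)) (Fin (m + 1)) ℚ :=
      Matrix.diagonal (fun r => if r = 0 then 1 else g) with hD
    set Z : Matrix (Fin (m + 1)) (Fin (m + 1)) ℤ :=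
      Matrix.of (fun r c => if r = 0 then bz c else W r c - W 0 c) with hZ
    have hDM : D * M = Z.map (Int.cast : ℤ → ℚ) := by
      ext r c
      rw [hD, Matrix.diagonal_mul]
      by_cases hr : r = 0
      · subst hr
        simp [hM, hZ, Matrix.updateRow_self, hbz c]
      · have h1 : M r c = R r c - R 0 c := by
          rw [hM, Matrix.updateRow_ne hr, hBrow r hr c]
        simp only [hr, if_false, hZ, Matrix.map_apply, Matrix.of_apply]
        rw [h1, mul_sub, hW r c, hW 0 c]
        push_cast; ring
    have hdetD : D.det = g ^ m := by
      rw [hD, Matrix.det_diagonal, Fin.prod_univ_succ]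
      simp [Fin.succ_ne_zero]
    refine ⟨Z.det, ?_⟩
    calc g ^ m * M.det = D.det * M.det := by rw [hdetD]
      _ = (D * M).det := (Matrix.det_mul D M).symm
      _ = (Z.map (Int.cast : ℤ → ℚ)).det := by rw [hDM]
      _ = (Z.det : ℚ) := by
          rw [show (Int.cast : ℤ → ℚ) = ⇑(Int.castRingHom ℚ) from rfl]
          exact (RingHom.map_det (Int.castRingHom ℚ) Z).symm
  have hcint : ∀ c, ∃ z : ℤ, g ^ m * cvec c = (z : ℚ) := by
    intro c
    exact scale (sing c) (fun j => if c = j then 1 else 0)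
      (by intro j; by_cases h : c = j <;> simp [hsing, h])
  set C : Matrix (Fin (m + 1)) (Fin (m + 1)) ℚ := B.updateRow 0 vq with hC
  have hCrow0 : ∀ c, C 0 c = vq c := fun c => by rw [hC, Matrix.updateRow_self]
  have hCrows : ∀ (s : Fin (m + 1)), s ≠ 0 → ∀ c, C s c = B s c := fun s hs c => by
    rw [hC, Matrix.updateRow_ne hs]
  have hrowv : ∀ s, ∑ c, C s c * vq c = if s = 0 then ∑ c, vq c * vq c else 0 := by
    intro s
    by_cases hs : s = 0
    · subst hs
      rw [if_pos rfl]
      exact Finset.sum_congr rfl fun c _ => by rw [hCrow0 c]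
    · rw [if_neg hs]
      rw [show ∑ c, C s c * vq c = ∑ c, B s c * vq c from
        Finset.sum_congr rfl fun c _ => by rw [hCrows s hs c]]
      exact h_vorth s hs
  have hvq0 : vq ≠ 0 := by
    intro h0
    have : Finset.univ.gcd vi = 0 := by
      apply Finset.gcd_eq_zero_iff.mpr
      intro c _
      have := congrFun h0 c
      simpa [hvq] using this
    rw [hprim] at this; exact one_ne_zero this
  have hS : (0:ℚ) < ∑ c, vq c * vq c := by
    obtain ⟨c0, hc0⟩ : ∃ c0, vq c0 ≠ 0 := by
      by_contra hall
      push_neg at hall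
      exact hvq0 (funext fun c => hall c)
    apply Finset.sum_pos' (fun c _ => mul_self_nonneg _)
    exact ⟨c0, Finset.mem_univ c0, mul_self_pos.mpr hc0⟩
  by_cases hdc : C.det = 0
  · -- degenerate case: det B = 0
    have hdcT : Cᵀ.det = 0 := by rw [Matrix.det_transpose]; exact hdc
    obtain ⟨T, hT0, hTmul⟩ := Matrix.exists_mulVec_eq_zero_iff.mpr hdcT
    have hT00 : T 0 = 0 := by
      have hdot : ∑ c, (Cᵀ *ᵥ T) c * vq c = 0 := by
        rw [hTmul]; simp
      have hswap : ∑ c, (Cᵀ *ᵥ T) c * vq c = ∑ s, T s * (∑ c, C s c * vq c) := by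
        simp only [Matrix.mulVec, dotProduct, Matrix.transpose_apply, Finset.sum_mul,
          Finset.mul_sum]
        rw [Finset.sum_comm]
        exact Finset.sum_congr rfl fun s _ => Finset.sum_congr rfl fun c _ => by ring
      rw [hswap] at hdot
      have hsum : ∑ s, T s * (∑ c, C s c * vq c) = T 0 * ∑ c, vq c * vq c := by
        have hz : ∀ s : Fin m, T s.succ * (∑ c, C s.succ c * vq c) = 0 := by
          intro s
          rw [hrowv s.succ, if_neg (Fin.succ_ne_zero s), mul_zero]
        rw [Fin.sum_univ_succ, Finset.sum_eq_zero (fun s _ => hz s), add_zero, hrowv 0,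
          if_pos rfl]
      rw [hsum] at hdot
      exact (mul_eq_zero.mp hdot).resolve_right (ne_of_gt hS)
    have hBT : Bᵀ *ᵥ T = 0 := by
      funext c
      have h1 : (Cᵀ *ᵥ T) c = 0 := by rw [hTmul]; simp
      have h2 : (Bᵀ *ᵥ T) c = (Cᵀ *ᵥ T) c := by
        simp only [Matrix.mulVec, dotProduct, Matrix.transpose_apply]
        rw [Fin.sum_univ_succ, Fin.sum_univ_succ, hT00]
        simp only [mul_zero, zero_mul, zero_add]
        refine Finset.sum_congr rfl fun s _ => ?_
        rw [hCrows _ (Fin.succ_ne_zero s)]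
      rw [h2, h1]; simp
    have hdetBT : Bᵀ.det = 0 := Matrix.exists_mulVec_eq_zero_iff.mp ⟨T, hT0, hBT⟩
    refine ⟨0, ?_⟩
    rw [← hdetB, ← Matrix.det_transpose B, hdetBT]
    simp
  · -- nondegenerate case
    set μ : ℚ := C.det / (∑ c, vq c * vq c) with hμ
    have hmc : C *ᵥ cvec = fun r => if r = 0 then C.det else 0 := by
      funext r
      simp only [Matrix.mulVec, dotProduct]
      by_cases hr : r = 0
      · subst hr
        rw [if_pos rfl]
        rw [show ∑ c, C 0 c * cvec c = ∑ c, vq c * cvec c from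
          Finset.sum_congr rfl fun c _ => by rw [hCrow0 c]]
        rw [← h_expand vq, hC]
      · rw [if_neg hr]
        rw [show ∑ c, C r c * cvec c = ∑ c, B r c * cvec c from
          Finset.sum_congr rfl fun c _ => by rw [hCrows r hr c]]
        exact h_orth r hr
    have hmv : C *ᵥ (μ • vq) = fun r => if r = 0 then C.det else 0 := by
      funext r
      rw [Matrix.mulVec_smul]
      have h1 : (C *ᵥ vq) r = if r = 0 then (∑ c, vq c * vq c) else 0 := by
        simp only [Matrix.mulVec, dotProduct]
        exact hrowv r
      show μ • (C *ᵥ vq) r = _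
      rw [h1]
      by_cases hr : r = 0
      · rw [if_pos hr, if_pos hr, hμ, smul_eq_mul, div_mul_cancel₀ _ (ne_of_gt hS)]
      · rw [if_neg hr, if_neg hr, smul_eq_mul, mul_zero]
    have hceq : cvec = μ • vq := by
      have h1 : C⁻¹ *ᵥ (C *ᵥ cvec) = C⁻¹ *ᵥ (C *ᵥ (μ • vq)) := by rw [hmc, hmv]
      rwa [Matrix.mulVec_mulVec, Matrix.mulVec_mulVec,
        Matrix.nonsing_inv_mul C (isUnit_iff_ne_zero.mpr hdc),
        Matrix.one_mulVec, Matrix.one_mulVec] at h1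
    have h3 : B.det = ∑ c, B 0 c * cvec c := by
      rw [← h_expand (B 0), Matrix.updateRow_eq_self]
    have h5 : B.det = -μ := by
      rw [h3]
      rw [show ∑ c, B 0 c * cvec c = μ * ∑ c, R 0 c * vq c from ?_]
      · have h2 : ∑ c, R 0 c * vq c = -1 := hR 0
        rw [h2]; ring
      · rw [Finset.mul_sum]
        refine Finset.sum_congr rfl fun c _ => ?_
        rw [hBrow0 c, hceq, Pi.smul_apply, smul_eq_mul]; ring
    have hqint : ∀ c, ∃ z : ℤ, (g ^ m * μ) * (vi c : ℚ) = (z : ℚ) := by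
      intro c
      obtain ⟨z, hz⟩ := hcint c
      refine ⟨z, ?_⟩
      rw [← hz, hceq, Pi.smul_apply, smul_eq_mul]
      show g ^ m * μ * vq c = _
      ring
    obtain ⟨z, hz⟩ := rat_eq_int_of_forall_mul_int (g ^ m * μ) vi
      (fun k _ hdvd => by
        have h : k ∣ Finset.univ.gcd vi := Finset.dvd_gcd (fun c _ => hdvd c)
        rwa [hprim] at h) hqint
    refine ⟨-z, ?_⟩
    rw [← hdetB, h5, mul_neg, hz]
    push_cast; ring

/-- For a `d`-dimensional Fano simplex `Δ` of Gorenstein index `g`,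
the product `g^{d-1}·λ(Δ*)` is an integer, where `λ(Δ*)` is the factor of the weight
system of the dual simplex `Δ*` (whose vertices `u_i` satisfy `⟨u_i, v_j⟩ = -1` for
`i ≠ j`). -/
theorem gpow_mul_dual_factor_integral
    (d g : ℕ) (hd : 2 ≤ d)
    (v : Fin (d + 1) → Fin d → ℤ)
    (hFano : IsFanoSimplex v)
    (hGor : gorensteinIndex (fun i => toQ (v i)) = g)
    (u : Fin (d + 1) → Fin d → ℚ)
    (hu : ∀ i j, i ≠ j → ∑ c, u i c * (v j c : ℚ) = -1)
    (lamu : ℚ) (hlamu : IsFactor u lamu) :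
    ∃ z : ℤ, (g : ℚ) ^ (d - 1) * lamu = (z : ℚ) := by
  classical
  obtain ⟨e, rfl⟩ : ∃ e, d = e + 2 := ⟨d - 2, by omega⟩
  rcases Nat.eq_zero_or_pos g with hg0 | hgpos
  · subst hg0
    exact ⟨0, by show ((0:ℕ):ℚ) ^ (e+1) * lamu = ((0:ℤ):ℚ); simp⟩
  set P : Fin (e + 3) → Fin (e + 2) → ℚ := fun i => toQ (v i) with hP
  obtain ⟨hAI, hprim, w, hwpos, hwsum, hworth⟩ := hFano
  have hworth' : ∀ c, ∑ k, w k * P k c = 0 := fun c => hworth c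
  have hAI' : AffineIndependent ℚ P := hAI
  have hpair : ∀ j k, j ≠ k → ∑ c, u j c * P k c = -1 := fun j k h => hu j k h
  -- general double-sum swap
  have hswapgen : ∀ y : Fin (e + 2) → ℚ, ∑ k, w k * (∑ c, y c * P k c) = 0 := by
    intro y
    calc ∑ k, w k * (∑ c, y c * P k c)
        = ∑ c, y c * (∑ k, w k * P k c) := by
          simp only [Finset.mul_sum]
          rw [Finset.sum_comm]
          exact Finset.sum_congr rfl fun c _ => Finset.sum_congr rfl fun k _ => by ring
      _ = 0 := Finset.sum_eq_zero fun c _ => by rw [hworth' c, mul_zero]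
  -- Step I : u j lies in the dual body
  have hself : ∀ j, (0:ℚ) ≤ ∑ c, u j c * P j c := by
    intro j
    have hzero := hswapgen (u j)
    rw [Fin.sum_univ_succAbove (fun k => w k * (∑ c, u j c * P k c)) j] at hzero
    have hz2 : ∑ r : Fin (e + 2), w (j.succAbove r) * (∑ c, u j c * P (j.succAbove r) c)
        = - ∑ r : Fin (e + 2), w (j.succAbove r) := by
      rw [← Finset.sum_neg_distrib]
      exact Finset.sum_congr rfl fun r _ => by
        rw [hpair j (j.succAbove r) (Fin.succAbove_ne j r).symm]; ring
    rw [hz2] at hzero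
    have hwS : 0 ≤ w j * ∑ c, u j c * P j c := by
      have : w j * (∑ c, u j c * P j c) = ∑ r : Fin (e + 2), w (j.succAbove r) := by
        linarith
      rw [this]
      exact Finset.sum_nonneg fun r _ => (hwpos _).le
    by_contra hcon
    push_neg at hcon
    nlinarith [mul_pos (hwpos j) (neg_pos.mpr hcon)]
  have hdual : ∀ j, u j ∈ dualBody (simplexHull P) := by
    intro j
    have hsub : Set.range P ⊆ {x : Fin (e + 2) → ℚ | (-1:ℚ) ≤ ∑ c, u j c * x c} := by
      rintro _ ⟨k, rfl⟩
      by_cases hk : j = k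
      · subst hk
        exact le_trans (by norm_num) (hself j)
      · exact le_of_eq (hpair j k hk).symm
    have hlin : IsLinearMap ℚ (fun x : Fin (e + 2) → ℚ => ∑ c, u j c * x c) := by
      constructor
      · intro a b
        rw [← Finset.sum_add_distrib]
        exact Finset.sum_congr rfl fun c _ => by simp [Pi.add_apply]; ring
      · intro a x
        rw [Finset.smul_sum]
        exact Finset.sum_congr rfl fun c _ => by simp [Pi.smul_apply, smul_eq_mul]; ring
    intro x hx
    exact convexHull_min hsub (convex_halfSpace_ge hlin (-1)) hx
  -- Step II : the lattice property at level g
  have hlat : IsLatticeSet ((g:ℚ) • dualBody (simplexHull P)) := by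
    have hne : {n : ℕ | 0 < n ∧ IsLatticeSet ((n:ℚ) • dualBody (simplexHull P))}.Nonempty := by
      by_contra hcon
      rw [Set.not_nonempty_iff_eq_empty] at hcon
      have h0 : gorensteinIndex P = 0 := by
        rw [gorensteinIndex, hcon, Nat.sInf_empty]
      rw [hGor] at h0
      omega
    have hmem := Nat.sInf_mem hne
    have : sInf {n : ℕ | 0 < n ∧ IsLatticeSet ((n:ℚ) • dualBody (simplexHull P))}
        = gorensteinIndex P := rfl
    rw [this, hGor] at hmem
    exact hmem.2
  -- span of the vertices is everything
  have hvs_top : Submodule.span ℚ (Set.range P) = ⊤ := by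
    have hvs : vectorSpan ℚ (Set.range P) = ⊤ := by
      apply Submodule.eq_top_of_finrank_eq
      rw [hAI'.finrank_vectorSpan (by simp : Fintype.card (Fin (e + 3)) = (e + 2) + 1),
        Module.finrank_pi, Fintype.card_fin]
    apply top_unique
    rw [← hvs, vectorSpan]
    apply Submodule.span_le.mpr
    rintro x ⟨a, ⟨k1, rfl⟩, b, ⟨k2, rfl⟩, rfl⟩
    exact Submodule.sub_mem _ (Submodule.subset_span ⟨k1, rfl⟩)
      (Submodule.subset_span ⟨k2, rfl⟩)
  have horthzero : ∀ x : Fin (e + 2) → ℚ, (∀ k, ∑ c, x c * P k c = 0) → x = 0 := by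
    intro x hx
    set ψ : (Fin (e + 2) → ℚ) →ₗ[ℚ] ℚ := ∑ c, x c • LinearMap.proj c with hψdef
    have hψ : ∀ y, ψ y = ∑ c, x c * y c := by
      intro y
      rw [hψdef]
      simp [LinearMap.sum_apply, LinearMap.smul_apply, LinearMap.proj_apply, smul_eq_mul]
    have hle : Submodule.span ℚ (Set.range P) ≤ LinearMap.ker ψ := by
      apply Submodule.span_le.mpr
      rintro _ ⟨k, rfl⟩
      have hk : ψ (P k) = 0 := by rw [hψ]; exact hx k
      exact LinearMap.mem_ker.mpr hk
    funext c
    have hsingle : Pi.single c (1:ℚ) ∈ Submodule.span ℚ (Set.range P) := by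
      rw [hvs_top]; trivial
    have hc : ψ (Pi.single c (1:ℚ)) = 0 := LinearMap.mem_ker.mp (hle hsingle)
    rw [hψ] at hc
    have hx' : ∑ c', x c' * (Pi.single c (1:ℚ) : Fin (e+2) → ℚ) c' = x c := by
      simp [Pi.single_apply]
    rw [hx'] at hc
    simpa using hc
  -- Step III : g • u j is integral
  have hWint : ∀ j c, ∃ z : ℤ, (g:ℚ) * u j c = (z:ℚ) := by
    intro j
    have hx0 : (g:ℚ) • u j ∈ (g:ℚ) • dualBody (simplexHull P) :=
      Set.smul_mem_smul_set (hdual j)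
    rw [hlat, _root_.convexHull_eq] at hx0
    obtain ⟨ι, t, wt, zt, hw0, hw1, hzT, hcm⟩ := hx0
    rw [Finset.centerMass_eq_of_sum_1 _ _ hw1] at hcm
    have hztmem : ∀ s ∈ t, (∀ k, -(g:ℚ) ≤ ∑ c, zt s c * P k c) ∧
        (∀ c, ∃ z : ℤ, zt s c = (z:ℚ)) := by
      intro s hs
      obtain ⟨hmem, hint⟩ := hzT s hs
      obtain ⟨y, hy, hyz⟩ := Set.mem_smul_set.mp hmem
      refine ⟨fun k => ?_, hint⟩
      have h1 : -1 ≤ ∑ c, y c * P k c := hy (P k) (subset_convexHull ℚ _ ⟨k, rfl⟩)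
      have h2 : ∑ c, zt s c * P k c = (g:ℚ) * ∑ c, y c * P k c := by
        rw [← hyz, Finset.mul_sum]
        exact Finset.sum_congr rfl fun c _ => by
          simp [Pi.smul_apply, smul_eq_mul]; ring
      rw [h2]
      have hgnn : (0:ℚ) ≤ g := by positivity
      nlinarith [mul_le_mul_of_nonneg_left h1 hgnn]
    have hval : ∀ k, j ≠ k → ∑ c, ((g:ℚ) • u j) c * P k c = -(g:ℚ) := by
      intro k hk
      have : ∑ c, ((g:ℚ) • u j) c * P k c = (g:ℚ) * ∑ c, u j c * P k c := by
        rw [Finset.mul_sum]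
        exact Finset.sum_congr rfl fun c _ => by simp [Pi.smul_apply, smul_eq_mul]; ring
      rw [this, hpair j k hk]; ring
    have hswapt : ∀ k, ∑ c, ((g:ℚ) • u j) c * P k c
        = ∑ s ∈ t, wt s * (∑ c, zt s c * P k c) := by
      intro k
      rw [← hcm]
      calc ∑ c, (∑ s ∈ t, wt s • zt s) c * P k c
          = ∑ c, ∑ s ∈ t, wt s * zt s c * P k c := by
            refine Finset.sum_congr rfl fun c _ => ?_
            rw [Finset.sum_apply, Finset.sum_mul]
            exact Finset.sum_congr rfl fun s _ => by simp [smul_eq_mul]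
        _ = ∑ s ∈ t, wt s * (∑ c, zt s c * P k c) := by
            rw [Finset.sum_comm]
            exact Finset.sum_congr rfl fun s _ => by
              rw [Finset.mul_sum]
              exact Finset.sum_congr rfl fun c _ => by ring
    obtain ⟨s0, hs0t, hs0w⟩ : ∃ s0 ∈ t, 0 < wt s0 := by
      by_contra hcon
      push_neg at hcon
      have : ∑ s ∈ t, wt s = 0 := Finset.sum_eq_zero fun s hs =>
        le_antisymm (hcon s hs) (hw0 s hs)
      rw [hw1] at this
      exact one_ne_zero this
    have hs0 : ∀ k, j ≠ k → ∑ c, zt s0 c * P k c = -(g:ℚ) := by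
      intro k hk
      have htot : ∑ s ∈ t, wt s * ((∑ c, zt s c * P k c) + g) = 0 := by
        calc ∑ s ∈ t, wt s * ((∑ c, zt s c * P k c) + g)
            = (∑ s ∈ t, wt s * (∑ c, zt s c * P k c)) + (∑ s ∈ t, wt s) * g := by
              rw [Finset.sum_mul, ← Finset.sum_add_distrib]
              exact Finset.sum_congr rfl fun s _ => by ring
          _ = -(g:ℚ) + 1 * g := by rw [← hswapt k, hval k hk, hw1]
          _ = 0 := by ring
      have hzero := (Finset.sum_eq_zero_iff_of_nonneg (fun s hs =>
        mul_nonneg (hw0 s hs) (by linarith [(hztmem s hs).1 k]))).mp htot s0 hs0t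
      have := (mul_eq_zero.mp hzero).resolve_left (ne_of_gt hs0w)
      linarith
    set x : Fin (e + 2) → ℚ := fun c => zt s0 c - (g:ℚ) * u j c with hxdef
    have hxk : ∀ k, j ≠ k → ∑ c, x c * P k c = 0 := by
      intro k hk
      have h2 : ∑ c, ((g:ℚ) • u j) c * P k c = -(g:ℚ) := hval k hk
      have h3 : ∑ c, x c * P k c
          = (∑ c, zt s0 c * P k c) - ∑ c, ((g:ℚ) • u j) c * P k c := by
        rw [← Finset.sum_sub_distrib]
        exact Finset.sum_congr rfl fun c _ => by
          simp only [hxdef, Pi.smul_apply, smul_eq_mul]; ring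
      rw [h3, hs0 k hk, h2]; ring
    have hxall : ∀ k, ∑ c, x c * P k c = 0 := by
      intro k
      by_cases hk : j = k
      · subst hk
        have hsum0 := hswapgen x
        rw [Fin.sum_univ_succAbove (fun k => w k * (∑ c, x c * P k c)) j] at hsum0
        have hz3 : ∑ r : Fin (e + 2), w (j.succAbove r) * (∑ c, x c * P (j.succAbove r) c) = 0 :=
          Finset.sum_eq_zero fun r _ => by
            rw [hxk _ (Fin.succAbove_ne j r).symm, mul_zero]
        rw [hz3, add_zero] at hsum0
        have := (mul_eq_zero.mp hsum0).resolve_left (ne_of_gt (hwpos j))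
        exact this
      · exact hxk k hk
    have hx0 : x = 0 := horthzero x hxall
    intro c
    obtain ⟨z, hz⟩ := (hztmem s0 hs0t).2 c
    refine ⟨z, ?_⟩
    have hcc := congrFun hx0 c
    simp only [hxdef, Pi.zero_apply] at hcc
    rw [← hz]
    linarith
  -- Step IV : conclude
  obtain ⟨N, hNpos, hNgcd, hNw⟩ := hlamu
  have hwint : ∀ i, ∃ z : ℤ, (g:ℚ) ^ (e+1) * weight u i = (z:ℚ) := by
    intro i
    obtain ⟨z, hz⟩ := key_det (m := e + 1) (g:ℚ) (v i) (hprim i)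
      (fun r c => u (i.succAbove r) c)
      (fun r => hu (i.succAbove r) i (Fin.succAbove_ne i r))
      (fun r c => hWint (i.succAbove r) c)
    refine ⟨|z|, ?_⟩
    have hg : (0:ℚ) ≤ (g:ℚ) ^ (e+1) := by positivity
    calc (g:ℚ) ^ (e+1) * weight u i
        = |(g:ℚ) ^ (e+1) * (Matrix.of fun r c : Fin (e+2) => u (i.succAbove r) c).det| := by
          rw [weight, abs_mul, abs_of_nonneg hg]
      _ = |(z:ℚ)| := by rw [hz]
      _ = ((|z| : ℤ) : ℚ) := (Int.cast_abs).symm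
  have hqN : ∀ i, ∃ z : ℤ, ((g:ℚ) ^ (e+1) * lamu) * ((N i : ℤ) : ℚ) = (z:ℚ) := by
    intro i
    obtain ⟨z, hz⟩ := hwint i
    refine ⟨z, ?_⟩
    rw [← hz, hNw i]
    push_cast
    ring
  obtain ⟨z, hz⟩ := rat_eq_int_of_forall_mul_int ((g:ℚ) ^ (e+1) * lamu) (fun i => (N i : ℤ))
    (fun k hk hdvd => by
      lift k to ℕ using hk with k'
      have h1 : k' ∣ Finset.univ.gcd N := Finset.dvd_gcd (fun c _ => by
        exact_mod_cast hdvd c)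
      rw [hNgcd] at h1
      exact_mod_cast h1) hqN
  exact ⟨z, hz⟩
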